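/- The relation ≠ on an infinite set X is generic, and hence the semi-simplicial set of tuples of pairwise distinct elements of X is boundedly acyclic. -/

import Mathlib

/-- A real-valued function is bounded. -/
def IsBddFun {α : Type*} (f : α → ℝ) : Prop := ∃ C : ℝ, ∀ x, |f x| ≤ C

/-- Tuples pairwise related by `r` in increasing index order. -/
def PairwiseRel {X : Type*} (r : X → X → Prop) {m : ℕ} (f : Fin m → X) : Prop :=
  ∀ i j : Fin m, i < j → r (f i) (f j)

/-- The set `X_n^⊥` of `(n+1)`-tuples pairwise related by `r`. -/
def Splx {X : Type*} (r : X → X → Prop) (n : ℕ) : Type _ :=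
  { f : Fin (n + 1) → X // PairwiseRel r f }

/-- Faces of a simplex. -/
def Splx.face {X : Type*} {r : X → X → Prop} {n : ℕ} (i : Fin (n + 2))
    (σ : Splx r (n + 1)) : Splx r n :=
  ⟨σ.1 ∘ i.succAbove, fun _ _ hab => σ.2 _ _ (Fin.succAbove_lt_succAbove_iff.mpr hab)⟩

/-- The alternating-sum coboundary `ℓ^∞(X_n^⊥) → ℓ^∞(X_{n+1}^⊥)`. -/
noncomputable def scoboundary {X : Type*} {r : X → X → Prop} {n : ℕ}
    (f : Splx r n → ℝ) : Splx r (n + 1) → ℝ :=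
  fun σ => ∑ i : Fin (n + 2), (-1 : ℝ) ^ (i : ℕ) * f (Splx.face i σ)
/-!
For a generic relation `r`, the sets of points related to every point of a finite set generate a
proper filter; fix an ultrafilter `U` finer than it. Given a bounded cocycle `c`, put
`b τ = lim_{x → U} c (x * τ)`, where `x * τ` is the cone on `τ` with apex `x`; the limit exists
because `c` is bounded, and `b` is bounded by the same constant. For `U`-almost every `x` the cone
`x * σ` is a simplex, and the cocycle identity `δc (x * σ) = 0` says `c σ = δ(c (x * ·)) σ`;
passing to the limit along `U` gives `δb = c`. On an infinite set `≠` is generic.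
-/

open Filter Topology

section

variable {X : Type*}

def IsGeneric (r : X → X → Prop) : Prop :=
  ∀ F : Finset X, ∃ x, ∀ y ∈ F, r x y

theorem isGeneric_ne [Infinite X] : IsGeneric (fun a b : X => a ≠ b) := fun F =>
  let ⟨x, hx⟩ := Infinite.exists_notMem_finset F
  ⟨x, fun _ hy h => hx (h ▸ hy)⟩

namespace Splx

variable {r : X → X → Prop}

def cone {m : ℕ} (x : X) (τ : Splx r m) (hx : ∀ j, r x (τ.1 j)) : Splx r (m + 1) :=
  ⟨Fin.cons x τ.1, by
    intro i j hij
    rcases Fin.eq_zero_or_eq_succ j with rfl | ⟨j, rfl⟩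
    · exact absurd hij (Fin.not_lt_zero _)
    rcases Fin.eq_zero_or_eq_succ i with rfl | ⟨i, rfl⟩
    · simpa using hx j
    · simpa using τ.2 i j (Fin.succ_lt_succ_iff.mp hij)⟩

theorem face_zero_cone {n : ℕ} (x : X) (τ : Splx r n) (hx : ∀ j, r x (τ.1 j)) :
    face 0 (cone x τ hx) = τ :=
  Subtype.ext <| funext fun j => by simp [face, cone]

theorem face_succ_cone {n : ℕ} (x : X) (τ : Splx r (n + 1)) (hx : ∀ j, r x (τ.1 j))
    (i : Fin (n + 2)) :
    face i.succ (cone x τ hx) = cone x (face i τ) (fun j => hx (i.succAbove j)) := by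
  refine Subtype.ext <| funext fun j => ?_
  rcases Fin.eq_zero_or_eq_succ j with rfl | ⟨j, rfl⟩
  · simp [face, cone]
  · simp [face, cone, Fin.removeNth_apply]

end Splx

section Cone

variable {r : X → X → Prop} {n : ℕ}

open Classical in
noncomputable def conePullback (c : Splx r (n + 1) → ℝ) (x : X) : Splx r n → ℝ :=
  fun τ => if hx : ∀ j, r x (τ.1 j) then c (Splx.cone x τ hx) else 0

theorem conePullback_of_rel (c : Splx r (n + 1) → ℝ) {x : X} {τ : Splx r n}
    (hx : ∀ j, r x (τ.1 j)) : conePullback c x τ = c (Splx.cone x τ hx) :=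
  dif_pos hx

theorem abs_conePullback_le {c : Splx r (n + 1) → ℝ} {C : ℝ} (hC : ∀ σ, |c σ| ≤ C) (x : X)
    (τ : Splx r n) : |conePullback c x τ| ≤ max C 0 := by
  unfold conePullback
  split_ifs
  · exact (hC _).trans (le_max_left _ _)
  · simp

/-- The cocycle identity `δc (x * σ) = 0`, solved for `c σ`. -/
theorem scoboundary_conePullback {c : Splx r (n + 1) → ℝ} (hc : scoboundary c = 0) {x : X}
    {σ : Splx r (n + 1)} (hx : ∀ j, r x (σ.1 j)) :
    scoboundary (conePullback c x) σ = c σ := by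
  have hcone := congrFun hc (Splx.cone x σ hx)
  rw [scoboundary, Fin.sum_univ_succ] at hcone
  simp only [Splx.face_zero_cone, Splx.face_succ_cone, Fin.val_zero, Fin.val_succ, pow_zero,
    pow_succ, one_mul, mul_neg_one, neg_mul, Finset.sum_neg_distrib, Pi.zero_apply] at hcone
  have hfaces : ∀ i : Fin (n + 2), conePullback c x (Splx.face i σ) =
      c (Splx.cone x (Splx.face i σ) fun j => hx (i.succAbove j)) := fun i =>
    conePullback_of_rel c _
  simp only [scoboundary, hfaces]
  linarith

theorem tendsto_scoboundary {ι : Type*} {l : Filter ι} {f : ι → Splx r n → ℝ}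
    {b : Splx r n → ℝ} (hf : ∀ τ, Tendsto (fun i => f i τ) l (𝓝 (b τ))) (σ : Splx r (n + 1)) :
    Tendsto (fun i => scoboundary (f i) σ) l (𝓝 (scoboundary b σ)) :=
  tendsto_finsetSum _ fun _ _ => (hf _).const_mul _

end Cone

def apexFilter (r : X → X → Prop) : Filter X :=
  ⨅ F : Finset X, 𝓟 {x | ∀ y ∈ F, r x y}

theorem IsGeneric.apexFilter_neBot {r : X → X → Prop} (hr : IsGeneric r) :
    (apexFilter r).NeBot :=
  iInf_neBot_of_directed'
    (Antitone.directed_ge fun _ _ hFG =>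
      principal_mono.2 fun _ hx y hy => hx y (Finset.mem_of_subset hFG hy))
    fun F => principal_neBot_iff.2 (hr F)

theorem eventually_apexFilter (r : X → X → Prop) {m : ℕ} (τ : Fin m → X) :
    ∀ᶠ x in apexFilter r, ∀ j, r x (τ j) := by
  classical
  exact mem_iInf_of_mem (Finset.univ.image τ) <| mem_principal.2 fun x hx j =>
    hx _ (Finset.mem_image_of_mem τ (Finset.mem_univ j))

theorem Ultrafilter.tendsto_limUnder_of_abs_le {α : Type*} (U : Ultrafilter α) {g : α → ℝ}
    {C : ℝ} (hg : ∀ a, |g a| ≤ C) : Tendsto g U (𝓝 (limUnder U g)) := by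
  refine tendsto_nhds_limUnder ?_
  obtain ⟨L, -, hL⟩ := isCompact_Icc.ultrafilter_le_nhds' (U.map g)
    (Ultrafilter.mem_map.2 <| univ_mem' fun a => abs_le.1 (hg a))
  exact ⟨L, hL⟩

theorem IsGeneric.exists_bddFun_scoboundary_eq {r : X → X → Prop} (hr : IsGeneric r) {n : ℕ}
    {c : Splx r (n + 1) → ℝ} (hbdd : IsBddFun c) (hc : scoboundary c = 0) :
    ∃ b : Splx r n → ℝ, IsBddFun b ∧ scoboundary b = c := by
  obtain ⟨C, hC⟩ := hbdd
  have := hr.apexFilter_neBot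
  set U := Ultrafilter.of (apexFilter r)
  set b : Splx r n → ℝ := fun τ => limUnder U (conePullback c · τ)
  have hlim (τ : Splx r n) : Tendsto (conePullback c · τ) U (𝓝 (b τ)) :=
    U.tendsto_limUnder_of_abs_le (abs_conePullback_le hC · τ)
  have hb : IsBddFun b :=
    ⟨max C 0, fun τ => le_of_tendsto' (hlim τ).abs (abs_conePullback_le hC · τ)⟩
  have hcone (σ : Splx r (n + 1)) :
      (fun x => scoboundary (conePullback c x) σ) =ᶠ[U] fun _ => c σ := by
    filter_upwards [Ultrafilter.of_le (apexFilter r) (eventually_apexFilter r σ.1)] with x hx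
    exact scoboundary_conePullback hc hx
  exact ⟨b, hb, funext fun σ => tendsto_nhds_unique (tendsto_scoboundary hlim σ)
    (tendsto_const_nhds.congr' (hcone σ).symm)⟩

end

/-- on an infinite set, the relation `≠` is generic, hence the semi-simplicial
set of tuples of pairwise distinct elements is boundedly acyclic. -/
theorem ne_generic_boundedly_acyclic {X : Type*} [Infinite X] :
    (∀ F : Finset X, ∃ x : X, ∀ y ∈ F, x ≠ y) ∧
    (∀ (n : ℕ) (c : Splx (fun a b : X => a ≠ b) (n + 1) → ℝ), IsBddFun c →
      scoboundary c = 0 →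
      ∃ b : Splx (fun a b : X => a ≠ b) n → ℝ, IsBddFun b ∧ scoboundary b = c) :=
  ⟨isGeneric_ne, fun _ _ => isGeneric_ne.exists_bddFun_scoboundary_eq⟩
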